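/- Let σ : T → [0,∞) be a Carleson measure with constant C and let p ∈ (1, ∞). Then there is a constant C' depending only on C and p such that Σ_{x ∈ T} |𝒫f(x)|^p σ(x) ≤ C' ‖f‖_{L^p(ν)}^p for every f ∈ L^p(∂T, ν). -/

import Mathlib

open MeasureTheory
open scoped ENNReal NNReal

/-- The punctured boundary `∂T` of the tree: maps `ω : ℤ → T` with `lev (ω j) = j`
and `par (ω j) = ω (j+1)`. -/
def PBoundary {T : Type*} (par : T → T) (lev : T → ℤ) : Type _ :=
  {ω : ℤ → T // (∀ j : ℤ, lev (ω j) = j) ∧ ∀ j : ℤ, par (ω j) = ω (j + 1)}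

/-- The boundary sector `∂T_x`. -/
def sector {T : Type*} (par : T → T) (lev : T → ℤ) (x : T) : Set (PBoundary par lev) :=
  {ω : PBoundary par lev | ω.1 (lev x) = x}

/-- The σ-algebra on `∂T` generated by the sectors. -/
instance {T : Type*} (par : T → T) (lev : T → ℤ) : MeasurableSpace (PBoundary par lev) :=
  MeasurableSpace.generateFrom (Set.range (sector par lev))

/-- The flow measure `m_ν x = ν (∂T_x)` (as a real number). -/
noncomputable def mnu {T : Type*} (par : T → T) (lev : T → ℤ)
    (ν : Measure (PBoundary par lev)) (x : T) : ℝ :=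
  (ν (sector par lev x)).toReal

/-- The Poisson integral operator `𝒫 g (x) = m_ν(x)⁻¹ ∫_{∂T_x} g dν`. -/
noncomputable def poisson {T : Type*} (par : T → T) (lev : T → ℤ)
    (ν : Measure (PBoundary par lev)) (g : PBoundary par lev → ℝ) (x : T) : ℝ :=
  (mnu par lev ν x)⁻¹ * ∫ ω in sector par lev x, g ω ∂ν

/-- The sector `T_x = {y ∈ T : y lies below x}`. -/
def tsector {T : Type*} (par : T → T) (x : T) : Set T :=
  {y : T | ∃ n : ℕ, par^[n] y = x}

universe u

/-!
Fix `l > 0`. If `|𝒫f(x)| > l`, then `∫_{∂T_x} |f| dν > l ν(∂T_x)`, and since `{|f| ≤ l/2}`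
contributes at most `(l/2) ν(∂T_x)`, we get `(l/2) ν(∂T_x) ≤ ∫_{∂T_x ∩ {|f| > l/2}} |f| dν`.
The maximal vertices of any finite set of such `x` have pairwise disjoint sectors and dominate the
whole set, so the Carleson condition gives the weak-type estimate
`(l/2) σ{|𝒫f| > l} ≤ C ∫_{|f| > l/2} |f| dν`.
Multiplying by `2p l^(p-2)`, integrating over `l > 0` (layer cake on the left, Tonelli on the
right) gives the bound with constant `C 2^p p / (p - 1)`.
-/

open Set

section Iterate

variable {α : Type*} {f : α → α}

theorem finite_setOf_iterate_eq (hfin : ∀ x, {y | f y = x}.Finite) (n : ℕ) (x : α) :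
    {y | f^[n] y = x}.Finite := by
  induction n generalizing x with
  | zero => simp
  | succ n ih => exact (ih x).preimage' fun z _ => hfin z

theorem countable_of_finite_fibers_of_exists_iterate_eq [Nonempty α]
    (hfin : ∀ x, {y | f y = x}.Finite) (hconn : ∀ x y, ∃ n m : ℕ, f^[n] x = f^[m] y) :
    Countable α := by
  obtain ⟨x₀⟩ := ‹Nonempty α›
  have hcover : univ ⊆ ⋃ (m : ℕ) (n : ℕ), {y | f^[n] y = f^[m] x₀} := fun y _ => by
    obtain ⟨n, m, h⟩ := hconn y x₀
    exact mem_iUnion₂.2 ⟨m, n, h⟩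
  exact countable_univ_iff.1 <| (countable_iUnion fun m => countable_iUnion fun n =>
    (finite_setOf_iterate_eq hfin n _).countable).mono hcover

end Iterate

namespace PBoundary

variable {T : Type*} {par : T → T} {lev : T → ℤ}

theorem iterate_par_apply (ω : PBoundary par lev) (j : ℤ) (n : ℕ) :
    par^[n] (ω.1 j) = ω.1 (j + n) := by
  induction n with
  | zero => simp
  | succ n ih => rw [Function.iterate_succ_apply', ih, ω.2.2]; push_cast; ring_nf

theorem mem_sector_apply (ω : PBoundary par lev) (j : ℤ) : ω ∈ sector par lev (ω.1 j) :=
  congrArg ω.1 (ω.2.1 j)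

end PBoundary

section Tree

variable {T : Type*} {par : T → T} {lev : T → ℤ}

theorem measurableSet_sector (x : T) : MeasurableSet (sector par lev x) :=
  MeasurableSpace.measurableSet_generateFrom ⟨x, rfl⟩

theorem mem_tsector_self (x : T) : x ∈ tsector par x := ⟨0, rfl⟩

theorem mem_tsector_trans {x y z : T} (hxy : x ∈ tsector par y) (hyz : y ∈ tsector par z) :
    x ∈ tsector par z := by
  obtain ⟨n, rfl⟩ := hxy
  obtain ⟨m, rfl⟩ := hyz
  exact ⟨m + n, Function.iterate_add_apply ..⟩

theorem lev_iterate (hlev : ∀ x, lev (par x) = lev x + 1) (x : T) (n : ℕ) :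
    lev (par^[n] x) = lev x + n := by
  induction n with
  | zero => simp
  | succ n ih => rw [Function.iterate_succ_apply', hlev, ih]; push_cast; ring

theorem eq_of_mem_tsector_of_lev_le (hlev : ∀ x, lev (par x) = lev x + 1) {x y : T}
    (h : x ∈ tsector par y) (hle : lev y ≤ lev x) : x = y := by
  obtain ⟨n, rfl⟩ := h
  obtain rfl : n = 0 := by have := lev_iterate hlev x n; omega
  rfl

theorem mem_tsector_or_of_mem_sector {x y : T} {ω : PBoundary par lev}
    (hx : ω ∈ sector par lev x) (hy : ω ∈ sector par lev y) :
    x ∈ tsector par y ∨ y ∈ tsector par x := by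
  have below : ∀ {a b : T}, ω ∈ sector par lev a → ω ∈ sector par lev b → lev a ≤ lev b →
      a ∈ tsector par b := by
    intro a b ha hb hle
    obtain ⟨n, hn⟩ : ∃ n : ℕ, lev b = lev a + n := ⟨(lev b - lev a).toNat, by omega⟩
    exact ⟨n, by rw [← ha, ω.iterate_par_apply, ← hn, hb]⟩
  rcases le_total (lev x) (lev y) with h | h
  · exact .inl (below hx hy h)
  · exact .inr (below hy hx h)

theorem exists_subset_pairwiseDisjoint_sector_dominating (hlev : ∀ x, lev (par x) = lev x + 1)
    (s : Finset T) : ∃ M ⊆ s, (∀ x ∈ s, ∃ y ∈ M, x ∈ tsector par y) ∧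
      (M : Set T).PairwiseDisjoint (sector par lev) := by
  classical
  refine ⟨s.filter fun y => ∀ z ∈ s, y ∈ tsector par z → y = z, Finset.filter_subset _ _, ?_, ?_⟩
  · intro x hx
    obtain ⟨y, hy, hmax⟩ := (s.filter fun y => x ∈ tsector par y).exists_max_image lev
      ⟨x, Finset.mem_filter.2 ⟨hx, mem_tsector_self x⟩⟩
    obtain ⟨hys, hxy⟩ := Finset.mem_filter.1 hy
    refine ⟨y, Finset.mem_filter.2 ⟨hys, fun z hz hyz => ?_⟩, hxy⟩
    exact eq_of_mem_tsector_of_lev_le hlev hyz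
      (hmax z (Finset.mem_filter.2 ⟨hz, mem_tsector_trans hxy hyz⟩))
  · intro y₁ h₁ y₂ h₂ hne
    replace h₁ := Finset.mem_filter.1 (Finset.mem_coe.1 h₁)
    replace h₂ := Finset.mem_filter.1 (Finset.mem_coe.1 h₂)
    refine Set.disjoint_left.2 fun ω hω₁ hω₂ => hne ?_
    rcases mem_tsector_or_of_mem_sector hω₁ hω₂ with h | h
    · exact h₁.2 y₂ h₂.1 h
    · exact (h₂.2 y₁ h₁.1 h).symm

end Tree

section Carleson

variable {T : Type*} {par : T → T} {lev : T → ℤ} {ν ρ : Measure (PBoundary par lev)}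
  {σ : T → ℝ≥0} {C : ℝ≥0} {a : ℝ≥0∞}

theorem mul_sum_le_of_carleson (hlev : ∀ x, lev (par x) = lev x + 1)
    (hcar : ∀ x, ∑' y : tsector par x, (σ y.1 : ℝ≥0∞) ≤ C * ν (sector par lev x))
    {s : Finset T} (hs : ∀ x ∈ s, a * ν (sector par lev x) ≤ ρ (sector par lev x)) :
    a * ∑ x ∈ s, (σ x : ℝ≥0∞) ≤ C * ρ univ := by
  obtain ⟨M, hMs, hcover, hdisj⟩ := exists_subset_pairwiseDisjoint_sector_dominating hlev s
  have hsum : ∑ x ∈ s, (σ x : ℝ≥0∞) ≤ ∑ y ∈ M, ∑' z : tsector par y, (σ z : ℝ≥0∞) :=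
    calc ∑ x ∈ s, (σ x : ℝ≥0∞) = ∑' x : (s : Set T), (σ x : ℝ≥0∞) :=
          (Finset.tsum_subtype s _).symm
      _ ≤ ∑' x : ⋃ y ∈ M, tsector par y, (σ x : ℝ≥0∞) :=
          ENNReal.tsum_mono_subtype (fun x => (σ x : ℝ≥0∞)) fun x hx => by
            obtain ⟨y, hy, hxy⟩ := hcover x hx
            exact mem_iUnion₂.2 ⟨y, hy, hxy⟩
      _ ≤ _ := ENNReal.tsum_biUnion_le (fun x => (σ x : ℝ≥0∞)) M (tsector par)
  calc a * ∑ x ∈ s, (σ x : ℝ≥0∞)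
      ≤ a * ∑ y ∈ M, C * ν (sector par lev y) := by
        gcongr
        exact hsum.trans (Finset.sum_le_sum fun y _ => hcar y)
    _ = C * ∑ y ∈ M, a * ν (sector par lev y) := by
        simp only [Finset.mul_sum, mul_left_comm]
    _ ≤ C * ∑ y ∈ M, ρ (sector par lev y) := by
        gcongr with y hy
        exact hs y (hMs hy)
    _ = C * ρ (⋃ y ∈ M, sector par lev y) := by
        rw [measure_biUnion_finset hdisj fun y _ => measurableSet_sector y]
    _ ≤ C * ρ univ := by gcongr; exact subset_univ _

theorem mul_tsum_indicator_le_of_carleson (hlev : ∀ x, lev (par x) = lev x + 1)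
    (hcar : ∀ x, ∑' y : tsector par x, (σ y.1 : ℝ≥0∞) ≤ C * ν (sector par lev x))
    {s : Set T} (hs : ∀ x ∈ s, a * ν (sector par lev x) ≤ ρ (sector par lev x)) :
    a * ∑' x, s.indicator (fun x => (σ x : ℝ≥0∞)) x ≤ C * ρ univ := by
  classical
  rw [ENNReal.tsum_eq_iSup_sum, ENNReal.mul_iSup]
  refine iSup_le fun t => ?_
  simp only [indicator_apply]
  rw [← Finset.sum_filter]
  exact mul_sum_le_of_carleson hlev hcar fun x hx => hs x (Finset.mem_filter.1 hx).2

end Carleson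

section LayerCake

theorem lintegral_Ioo_ofReal_mul_rpow {c r : ℝ} (hc : 0 ≤ c) (hr : -1 < r) {t : ℝ} (ht : 0 ≤ t) :
    ∫⁻ l in Ioo 0 t, ENNReal.ofReal (c * l ^ r) = ENNReal.ofReal (c * (t ^ (r + 1) / (r + 1))) := by
  have hint : IntegrableOn (fun l : ℝ => c * l ^ r) (Ioo 0 t) := by
    have h := (intervalIntegral.intervalIntegrable_rpow' (a := 0) (b := t) hr).const_mul c
    rw [intervalIntegrable_iff, uIoc_of_le ht] at h
    exact h.mono_set Ioo_subset_Ioc_self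
  have hnonneg : 0 ≤ᵐ[volume.restrict (Ioo (0 : ℝ) t)] fun l => c * l ^ r := by
    filter_upwards [ae_restrict_mem measurableSet_Ioo] with l hl
    exact mul_nonneg hc (Real.rpow_nonneg hl.1.le r)
  rw [← ofReal_integral_eq_lintegral_ofReal hint hnonneg, ← integral_Ioc_eq_integral_Ioo,
    ← intervalIntegral.integral_of_le ht, intervalIntegral.integral_const_mul,
    integral_rpow (.inl hr), Real.zero_rpow (by linarith), sub_zero]

theorem ofReal_rpow_eq_lintegral_indicator {p : ℝ} (hp : 0 < p) {t : ℝ} (ht : 0 ≤ t) :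
    ENNReal.ofReal (t ^ p) =
      ∫⁻ l in Ioi 0, (Iio t).indicator (fun l => ENNReal.ofReal (p * l ^ (p - 1))) l := by
  rw [lintegral_indicator measurableSet_Iio, Measure.restrict_restrict measurableSet_Iio,
    inter_comm, Ioi_inter_Iio, lintegral_Ioo_ofReal_mul_rpow hp.le (by linarith) ht,
    sub_add_cancel, mul_div_cancel₀ _ hp.ne']

theorem lintegral_Ioi_mul_ite_lt {p : ℝ} (hp : 1 < p) {g : ℝ} (hg : 0 ≤ g) :
    ∫⁻ l in Ioi 0, ENNReal.ofReal (2 * p * l ^ (p - 2)) *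
        (if l / 2 < g then ENNReal.ofReal g else 0) =
      ENNReal.ofReal (2 ^ p * p / (p - 1)) * ENNReal.ofReal (g ^ p) := by
  have hind : (fun l : ℝ => ENNReal.ofReal (2 * p * l ^ (p - 2)) *
      (if l / 2 < g then ENNReal.ofReal g else 0)) =
      (Iio (2 * g)).indicator fun l => ENNReal.ofReal (2 * p * l ^ (p - 2)) * ENNReal.ofReal g := by
    ext l
    have hlt : l / 2 < g ↔ l < 2 * g := by constructor <;> intro <;> linarith
    simp only [indicator_apply, mem_Iio, hlt]
    split_ifs <;> simp
  have hcoef : 0 ≤ 2 * p * ((2 * g) ^ (p - 1) / (p - 1)) := by positivity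
  have hpow : ∀ x : ℝ, 0 ≤ x → x ^ p = x ^ (p - 1) * x := fun x hx => by
    rw [← Real.rpow_add_one' hx (by linarith), sub_add_cancel]
  rw [hind, lintegral_indicator measurableSet_Iio, Measure.restrict_restrict measurableSet_Iio,
    inter_comm, Ioi_inter_Iio, lintegral_mul_const' _ _ ENNReal.ofReal_ne_top,
    lintegral_Ioo_ofReal_mul_rpow (by linarith) (by linarith) (by linarith),
    show p - 2 + 1 = p - 1 by ring, ← ENNReal.ofReal_mul hcoef,
    ← ENNReal.ofReal_mul (by positivity),
    Real.mul_rpow zero_le_two hg, hpow 2 zero_le_two, hpow g hg]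
  ring_nf

theorem tsum_ofReal_rpow_mul_eq_lintegral {ι : Type*} [Countable ι] {p : ℝ} (hp : 0 < p)
    {φ : ι → ℝ} (hφ : ∀ i, 0 ≤ φ i) (w : ι → ℝ≥0∞) :
    ∑' i, ENNReal.ofReal (φ i ^ p) * w i =
      ∫⁻ l in Ioi 0, ENNReal.ofReal (p * l ^ (p - 1)) * ∑' i, {i | l < φ i}.indicator w i := by
  have hmeas : Measurable fun l : ℝ => ENNReal.ofReal (p * l ^ (p - 1)) := by fun_prop
  calc ∑' i, ENNReal.ofReal (φ i ^ p) * w i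
      = ∑' i, ∫⁻ l in Ioi 0,
          (Iio (φ i)).indicator (fun l => ENNReal.ofReal (p * l ^ (p - 1))) l * w i := by
        refine tsum_congr fun i => ?_
        rw [ofReal_rpow_eq_lintegral_indicator hp (hφ i),
          lintegral_mul_const _ (hmeas.indicator measurableSet_Iio)]
    _ = ∫⁻ l in Ioi 0, ∑' i,
          (Iio (φ i)).indicator (fun l => ENNReal.ofReal (p * l ^ (p - 1))) l * w i :=
        (lintegral_tsum fun i => ((hmeas.indicator measurableSet_Iio).mul_const _).aemeasurable).symm
    _ = _ := by
        simp_rw [← ENNReal.tsum_mul_left, indicator_apply, mem_Iio, mem_ofPred_eq]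
        congr! 3 with l
        funext i
        split_ifs <;> simp [mul_comm]

end LayerCake

section HalfMass

variable {α : Type*} [MeasurableSpace α] {μ : Measure α}

theorem lintegral_ofReal_le_lintegral_ite_add (g : α → ℝ) (t : ℝ) :
    ∫⁻ x, ENNReal.ofReal (g x) ∂μ ≤
      ∫⁻ x, (if t < g x then ENNReal.ofReal (g x) else 0) ∂μ + ENNReal.ofReal t * μ univ := by
  rw [← lintegral_const, ← lintegral_add_right _ measurable_const]
  refine lintegral_mono fun x => ?_
  split_ifs with h
  · exact le_self_add
  · simpa using ENNReal.ofReal_le_ofReal (not_lt.1 h)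

theorem mul_measure_univ_le_lintegral_ite (hμ : μ univ ≠ ∞) {g : α → ℝ} {a : ℝ≥0∞} {t : ℝ}
    (h : (a + ENNReal.ofReal t) * μ univ ≤ ∫⁻ x, ENNReal.ofReal (g x) ∂μ) :
    a * μ univ ≤ ∫⁻ x, (if t < g x then ENNReal.ofReal (g x) else 0) ∂μ := by
  rw [add_mul] at h
  exact (ENNReal.add_le_add_iff_right (ENNReal.mul_ne_top ENNReal.ofReal_ne_top hμ)).1
    (h.trans (lintegral_ofReal_le_lintegral_ite_add g t))

end HalfMass

section Embedding

variable {T : Type*} {par : T → T} {lev : T → ℤ} {ν : Measure (PBoundary par lev)}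
  {σ : T → ℝ≥0} {C : ℝ≥0}

theorem sigmaFinite_of_sector_ne_top [Countable T] (hν : ∀ x, ν (sector par lev x) ≠ ∞) :
    SigmaFinite ν :=
  Measure.sigmaFinite_of_countable (countable_range _)
    (forall_mem_range.2 fun x => (hν x).lt_top)
    (eq_univ_of_forall fun ω => mem_sUnion_of_mem (ω.mem_sector_apply 0) (mem_range_self _))

theorem ofReal_abs_poisson_mul_le {x : T} (h0 : ν (sector par lev x) ≠ 0)
    (htop : ν (sector par lev x) ≠ ∞) (f : PBoundary par lev → ℝ) :
    ENNReal.ofReal |poisson par lev ν f x| * ν (sector par lev x) ≤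
      ∫⁻ ω in sector par lev x, ENNReal.ofReal |f ω| ∂ν := by
  have hm : 0 < mnu par lev ν x := ENNReal.toReal_pos h0 htop
  calc ENNReal.ofReal |poisson par lev ν f x| * ν (sector par lev x)
      = ENNReal.ofReal |∫ ω in sector par lev x, f ω ∂ν| := by
        rw [← ENNReal.ofReal_toReal htop, ← ENNReal.ofReal_mul (abs_nonneg _), ← mnu, poisson,
          abs_mul, abs_inv, abs_of_pos hm, mul_comm, mul_inv_cancel_left₀ hm.ne']
    _ ≤ ENNReal.ofReal (∫⁻ ω in sector par lev x, ENNReal.ofReal ‖f ω‖ ∂ν).toReal :=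
        ENNReal.ofReal_le_ofReal (norm_integral_le_lintegral_norm f)
    _ ≤ ∫⁻ ω in sector par lev x, ENNReal.ofReal |f ω| ∂ν := ENNReal.ofReal_toReal_le

variable {f : PBoundary par lev → ℝ} {φ : T → ℝ}

theorem ofReal_half_mul_tsum_indicator_le (hlev : ∀ x, lev (par x) = lev x + 1)
    (hν : ∀ x, ν (sector par lev x) ≠ ∞)
    (hcar : ∀ x, ∑' y : tsector par x, (σ y.1 : ℝ≥0∞) ≤ C * ν (sector par lev x))
    (hφ : ∀ x, ENNReal.ofReal (φ x) * ν (sector par lev x) ≤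
      ∫⁻ ω in sector par lev x, ENNReal.ofReal |f ω| ∂ν)
    {l : ℝ} (hl : 0 < l) :
    ENNReal.ofReal (l / 2) * ∑' x, {x | l < φ x}.indicator (fun x => (σ x : ℝ≥0∞)) x ≤
      C * ∫⁻ ω, (if l / 2 < |f ω| then ENNReal.ofReal |f ω| else 0) ∂ν := by
  have hρ : ∀ s, MeasurableSet s → ν.withDensity
      (fun ω => if l / 2 < |f ω| then ENNReal.ofReal |f ω| else 0) s =
      ∫⁻ ω in s, (if l / 2 < |f ω| then ENNReal.ofReal |f ω| else 0) ∂ν :=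
    fun s hs => withDensity_apply _ hs
  rw [← setLIntegral_univ, ← hρ _ MeasurableSet.univ]
  refine mul_tsum_indicator_le_of_carleson hlev hcar fun x (hx : l < φ x) => ?_
  rw [hρ _ (measurableSet_sector x), ← Measure.restrict_apply_univ]
  refine mul_measure_univ_le_lintegral_ite (by simpa using hν x) ?_
  rw [← ENNReal.ofReal_add (by positivity) (by positivity), add_halves, Measure.restrict_apply_univ]
  exact (mul_le_mul_left (ENNReal.ofReal_le_ofReal hx.le) _).trans (hφ x)

theorem tsum_ofReal_rpow_mul_le_of_carleson [Countable T] (hlev : ∀ x, lev (par x) = lev x + 1)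
    (hν : ∀ x, ν (sector par lev x) ≠ ∞)
    (hcar : ∀ x, ∑' y : tsector par x, (σ y.1 : ℝ≥0∞) ≤ C * ν (sector par lev x))
    {p : ℝ} (hp : 1 < p) (hf : Measurable f) (hφ0 : ∀ x, 0 ≤ φ x)
    (hφ : ∀ x, ENNReal.ofReal (φ x) * ν (sector par lev x) ≤
      ∫⁻ ω in sector par lev x, ENNReal.ofReal |f ω| ∂ν) :
    ∑' x, ENNReal.ofReal (φ x ^ p) * σ x ≤
      C * ENNReal.ofReal (2 ^ p * p / (p - 1)) * ∫⁻ ω, ENNReal.ofReal (|f ω| ^ p) ∂ν := by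
  have := sigmaFinite_of_sector_ne_top hν
  set F : ℝ → PBoundary par lev → ℝ≥0∞ := fun l ω => ENNReal.ofReal (2 * p * l ^ (p - 2)) *
    (if l / 2 < |f ω| then ENNReal.ofReal |f ω| else 0) with hF_def
  have hF : Measurable (Function.uncurry F) := by
    refine Measurable.mul (by fun_prop) (Measurable.ite ?_ (by fun_prop) measurable_const)
    exact measurableSet_lt (by fun_prop) (by fun_prop)
  have hp_split (l : ℝ) (hl : 0 < l) : ENNReal.ofReal (p * l ^ (p - 1)) =
      ENNReal.ofReal (2 * p * l ^ (p - 2)) * ENNReal.ofReal (l / 2) := by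
    rw [← ENNReal.ofReal_mul (by positivity), show p - 1 = p - 2 + 1 by ring,
      Real.rpow_add_one hl.ne']
    ring_nf
  rw [tsum_ofReal_rpow_mul_eq_lintegral (by linarith) hφ0]
  calc ∫⁻ l in Ioi 0, ENNReal.ofReal (p * l ^ (p - 1)) *
        ∑' x, {x | l < φ x}.indicator (fun x => (σ x : ℝ≥0∞)) x
      ≤ ∫⁻ l in Ioi 0, C * ∫⁻ ω, F l ω ∂ν := by
        refine setLIntegral_mono' measurableSet_Ioi fun l (hl : 0 < l) => ?_
        calc ENNReal.ofReal (p * l ^ (p - 1)) *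
              ∑' x, {x | l < φ x}.indicator (fun x => (σ x : ℝ≥0∞)) x
            = ENNReal.ofReal (2 * p * l ^ (p - 2)) *
                (ENNReal.ofReal (l / 2) *
                  ∑' x, {x | l < φ x}.indicator (fun x => (σ x : ℝ≥0∞)) x) := by
              rw [hp_split l hl, mul_assoc]
          _ ≤ ENNReal.ofReal (2 * p * l ^ (p - 2)) *
                (C * ∫⁻ ω, (if l / 2 < |f ω| then ENNReal.ofReal |f ω| else 0) ∂ν) :=
              mul_le_mul_right (ofReal_half_mul_tsum_indicator_le hlev hν hcar hφ hl) _
          _ = C * ∫⁻ ω, F l ω ∂ν := by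
              rw [hF_def, lintegral_const_mul' _ _ ENNReal.ofReal_ne_top, mul_left_comm]
    _ = C * ∫⁻ ω, (∫⁻ l in Ioi 0, F l ω) ∂ν := by
        rw [lintegral_const_mul' _ _ ENNReal.coe_ne_top, lintegral_lintegral_swap hF.aemeasurable]
    _ = C * ENNReal.ofReal (2 ^ p * p / (p - 1)) * ∫⁻ ω, ENNReal.ofReal (|f ω| ^ p) ∂ν := by
        simp_rw [hF_def, lintegral_Ioi_mul_ite_lt hp (abs_nonneg _)]
        rw [lintegral_const_mul' _ _ ENNReal.ofReal_ne_top, mul_assoc]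

end Embedding

/-- If `σ` is a Carleson measure with constant `C` and `p ∈ (1,∞)`, then
there is a constant `C'` depending only on `C` and `p` such that
`Σ_{x ∈ T} |𝒫f(x)|^p σ(x) ≤ C' ‖f‖_{L^p(ν)}^p` for every `f ∈ L^p(∂T,ν)`. -/
theorem stmt11 (C : ℝ≥0) (p : ℝ) (hp : 1 < p) :
    ∃ C' : ℝ, 0 < C' ∧
      ∀ (T : Type u) (par : T → T) (lev : T → ℤ),
        Nonempty T →
        (∀ x : T, lev (par x) = lev x + 1) →
        (∀ x : T, {y : T | par y = x}.Finite) →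
        (∀ x : T, ∃ y : T, par y = x) →
        (∀ x y : T, ∃ n m : ℕ, par^[n] x = par^[m] y) →
        ∀ ν : Measure (PBoundary par lev),
          (∀ x : T, 0 < ν (sector par lev x) ∧ ν (sector par lev x) < ⊤) →
          ∀ σ : T → ℝ≥0,
            (∀ x : T, ∑' y : tsector par x, (σ y.1 : ℝ≥0∞)
              ≤ (C : ℝ≥0∞) * ν (sector par lev x)) →
            ∀ f : PBoundary par lev → ℝ, MemLp f (ENNReal.ofReal p) ν →
              ∑' x : T, ENNReal.ofReal (|poisson par lev ν f x| ^ p) * (σ x : ℝ≥0∞)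
                ≤ ENNReal.ofReal C' * ∫⁻ ω, ENNReal.ofReal (|f ω| ^ p) ∂ν := by
  refine ⟨2 ^ p * p / (p - 1) * C + 1, by positivity, ?_⟩
  intro T par lev _ hlev hfin _ hconn ν hν σ hcar f hf
  have := countable_of_finite_fibers_of_exists_iterate_eq hfin hconn
  obtain ⟨g, hgm, hfg⟩ := hf.aestronglyMeasurable
  have habs : ∀ᵐ ω ∂ν, ∀ q : ℝ, ENNReal.ofReal (|f ω| ^ q) = ENNReal.ofReal (|g ω| ^ q) :=
    hfg.mono fun ω h q => by rw [h]
  have hφ (x : T) : ENNReal.ofReal |poisson par lev ν f x| * ν (sector par lev x) ≤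
      ∫⁻ ω in sector par lev x, ENNReal.ofReal |g ω| ∂ν :=
    (ofReal_abs_poisson_mul_le (hν x).1.ne' (hν x).2.ne f).trans_eq
      (lintegral_congr_ae (ae_restrict_of_ae (habs.mono fun ω h => by simpa using h 1)))
  calc ∑' x, ENNReal.ofReal (|poisson par lev ν f x| ^ p) * σ x
      ≤ C * ENNReal.ofReal (2 ^ p * p / (p - 1)) * ∫⁻ ω, ENNReal.ofReal (|g ω| ^ p) ∂ν :=
        tsum_ofReal_rpow_mul_le_of_carleson hlev (fun x => (hν x).2.ne) hcar hp hgm.measurable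
          (fun _ => abs_nonneg _) hφ
    _ = C * ENNReal.ofReal (2 ^ p * p / (p - 1)) * ∫⁻ ω, ENNReal.ofReal (|f ω| ^ p) ∂ν := by
        rw [lintegral_congr_ae (habs.mono fun ω h => h p)]
    _ ≤ ENNReal.ofReal (2 ^ p * p / (p - 1) * C + 1) * ∫⁻ ω, ENNReal.ofReal (|f ω| ^ p) ∂ν := by
        rw [← ENNReal.ofReal_coe_nnreal, ← ENNReal.ofReal_mul C.coe_nonneg]
        gcongr
        linarith [mul_comm (C : ℝ) (2 ^ p * p / (p - 1))]
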